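/- Let k be a field and work in the one-variable case n = 1, with polynomial ring k[x]. For any finite index types B0 and B1 with degree functions d0 : B0 → ℕ and d1 : B1 → ℕ, the set of orbits of the action of the group GL(F(B0,d0)) of grade-respecting automorphisms on the set RF of relation families (given by μ·(V_v) = (μ(V_v))) is a finite set. -/
import Mathlib

open Module

set_option maxHeartbeats 1000000
set_option synthInstance.maxHeartbeats 400000


noncomputable section

/-- The degree-`v` graded piece of the free graded `k[x]`-module `F(B,d)`:
elements whose `e_b`-coordinate is a `k`-multiple of the monomial `x^{v−d(b)}`
whenever `d(b) ≤ v`, and `0` otherwise. -/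
def gradedPiece (k : Type) [Field k] {B : Type} (d : B → ℕ) (v : ℕ) :
    Submodule k (B → Polynomial k) :=
  ⨅ b : B, Submodule.comap
    (LinearMap.proj b : (B → Polynomial k) →ₗ[k] Polynomial k)
    (if d b ≤ v then Submodule.span k {Polynomial.monomial (v - d b) (1 : k)} else ⊥)

/-- A `k[x]`-linear automorphism of `F(B,d)` respects the grading if it maps each
graded piece onto itself; these automorphisms form the group `GL(F(B,d))`. -/
def GradeRespecting (k : Type) [Field k] {B : Type} (d : B → ℕ)
    (μ : (B → Polynomial k) ≃ₗ[Polynomial k] (B → Polynomial k)) : Prop :=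
  ∀ v : ℕ, (gradedPiece k d v).map (μ.toLinearMap.restrictScalars k) = gradedPiece k d v

/-- A relation family for `F(B₀,d₀)` and `F(B₁,d₁)`: a family of `k`-subspaces
`V_v ⊆ F(B₀,d₀)_v`, indexed by the degrees `v` in the image of `d₁`, with
`dim_k V_v = #{b ∈ B₁ : d₁(b) ≤ v}`, and `x^{v−u}·V_u ⊆ V_v` whenever `u ≤ v`
are both in the image of `d₁`. -/
def IsRelationFamily (k : Type) [Field k] {B0 B1 : Type}
    (d0 : B0 → ℕ) (d1 : B1 → ℕ)
    (V : {v : ℕ // v ∈ Set.range d1} → Submodule k (B0 → Polynomial k)) : Prop :=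
  (∀ v, V v ≤ gradedPiece k d0 v.1) ∧
  (∀ v, Module.finrank k (V v) = Nat.card {b : B1 // d1 b ≤ v.1}) ∧
  (∀ u v, u.1 ≤ v.1 → ∀ m ∈ V u,
    (Polynomial.monomial (v.1 - u.1) (1 : k) : Polynomial k) • m ∈ V v)

/-- Two relation families lie in the same orbit of `GL(F(B₀,d₀))` iff some
grade-respecting automorphism `μ` carries one to the other, `μ·(V_v) = (μ(V_v))`. -/
def sameOrbit (k : Type) [Field k] {B0 B1 : Type} (d0 : B0 → ℕ) (d1 : B1 → ℕ)
    (V W : {V : {v : ℕ // v ∈ Set.range d1} → Submodule k (B0 → Polynomial k) //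
      IsRelationFamily k d0 d1 V}) : Prop :=
  ∃ μ : (B0 → Polynomial k) ≃ₗ[Polynomial k] (B0 → Polynomial k),
    GradeRespecting k d0 μ ∧
      ∀ v, (V.1 v).map (μ.toLinearMap.restrictScalars k) = W.1 v




variable {K : Type} [Field K] {E : Type} [AddCommGroup E] [Module K E]

lemma relCompl (s t : Submodule K E) (h : s ≤ t) :
    ∃ c : Submodule K E, c ≤ t ∧ s ⊓ c = ⊥ ∧ s ⊔ c = t := by
  obtain ⟨c', hc'⟩ := Submodule.exists_isCompl (s.comap t.subtype)
  refine ⟨c'.map t.subtype, Submodule.map_subtype_le t c', ?_, ?_⟩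
  · rw [Submodule.eq_bot_iff]
    rintro x ⟨hxs, hxc⟩
    obtain ⟨y, hy, rfl⟩ := hxc
    have : y ∈ s.comap t.subtype ⊓ c' := ⟨hxs, hy⟩
    rw [hc'.inf_eq_bot, Submodule.mem_bot] at this
    simp [this]
  · apply le_antisymm (sup_le h (Submodule.map_subtype_le t c'))
    intro x hx
    have : (⟨x, hx⟩ : t) ∈ s.comap t.subtype ⊔ c' := by rw [hc'.sup_eq_top]; trivial
    obtain ⟨y, hy, z, hz, hyz⟩ := Submodule.mem_sup.1 this
    refine Submodule.mem_sup.2 ⟨y, hy, z, ⟨z, hz, rfl⟩, ?_⟩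
    exact congrArg Subtype.val hyz


lemma finrank_map_of_injOn {M N : Type} [AddCommGroup M] [Module K M] [AddCommGroup N]
    [Module K N] (θ : M →ₗ[K] N) (G p : Submodule K M) (hp : p ≤ G)
    (hinj : ∀ x ∈ G, θ x = 0 → x = 0) :
    finrank K ↥(p.map θ) = finrank K ↥p := by
  have hi : Function.Injective (θ.domRestrict p) := by
    intro x y hxy
    have : θ ((x : M) - (y : M)) = 0 := by
      rw [map_sub, sub_eq_zero]
      exact hxy
    have := hinj _ (Submodule.sub_mem G (hp x.2) (hp y.2)) this
    exact Subtype.ext (by rwa [sub_eq_zero] at this)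
  have e := LinearEquiv.ofInjective (θ.domRestrict p) hi
  rw [← LinearMap.range_domRestrict]
  exact (LinearEquiv.finrank_eq e).symm

lemma map_eq_of_injOn {M N : Type} [AddCommGroup M] [Module K M] [AddCommGroup N]
    [Module K N] (θ : M →ₗ[K] N) (G p q : Submodule K M) (hp : p ≤ G) (hq : q ≤ G)
    (hinj : ∀ x ∈ G, θ x = 0 → x = 0) (h : p.map θ = q.map θ) : p = q := by
  have key : ∀ p q : Submodule K M, p ≤ G → q ≤ G → p.map θ = q.map θ → p ≤ q := by
    intro p q hp hq h x hx
    have : θ x ∈ q.map θ := h ▸ Submodule.mem_map_of_mem hx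
    obtain ⟨y, hy, hxy⟩ := this
    have : x - y = 0 := hinj _ (Submodule.sub_mem G (hp hx) (hq hy))
      (by rw [map_sub, hxy, sub_self])
    rw [sub_eq_zero] at this
    exact this ▸ hy
  exact le_antisymm (key p q hp hq h) (key q p hq hp h.symm)

lemma span_finBasis [FiniteDimensional K E] (C : Submodule K E) :
    Submodule.span K (Set.range fun i => ((Module.finBasis K ↥C i : E))) = C := by
  have h1 : (fun i => ((Module.finBasis K ↥C i : E))) = C.subtype ∘ (Module.finBasis K ↥C) := rfl
  rw [h1, Set.range_comp, ← Submodule.map_span, Basis.span_eq, Submodule.map_subtype_top]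

/-- The grid complement pieces. -/
def gridC (V W : ℕ → Submodule K E) (hV : Monotone V) (hW : Monotone W) (p q : ℕ) :
    Submodule K E :=
  (relCompl ((V (p-1) ⊓ W q) ⊔ (V p ⊓ W (q-1))) (V p ⊓ W q)
    (sup_le (inf_le_inf (hV (Nat.sub_le p 1)) le_rfl)
      (inf_le_inf le_rfl (hW (Nat.sub_le q 1))))).choose

lemma gridC_spec (V W : ℕ → Submodule K E) (hV : Monotone V) (hW : Monotone W) (p q : ℕ) :
    gridC V W hV hW p q ≤ V p ⊓ W q ∧
    ((V (p-1) ⊓ W q) ⊔ (V p ⊓ W (q-1))) ⊓ gridC V W hV hW p q = ⊥ ∧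
    ((V (p-1) ⊓ W q) ⊔ (V p ⊓ W (q-1))) ⊔ gridC V W hV hW p q = V p ⊓ W q :=
  (relCompl ((V (p-1) ⊓ W q) ⊔ (V p ⊓ W (q-1))) (V p ⊓ W q)
    (sup_le (inf_le_inf (hV (Nat.sub_le p 1)) le_rfl)
      (inf_le_inf le_rfl (hW (Nat.sub_le q 1))))).choose_spec

lemma gridC_zero_left {V W : ℕ → Submodule K E} (hV : Monotone V) (hW : Monotone W)
    (hV0 : V 0 = ⊥) (q : ℕ) : gridC V W hV hW 0 q = ⊥ := by
  have := (gridC_spec V W hV hW 0 q).1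
  rw [hV0, bot_inf_eq, le_bot_iff] at this
  exact this

lemma gridC_zero_right {V W : ℕ → Submodule K E} (hV : Monotone V) (hW : Monotone W)
    (hW0 : W 0 = ⊥) (p : ℕ) : gridC V W hV hW p 0 = ⊥ := by
  have := (gridC_spec V W hV hW p 0).1
  rw [hW0, inf_bot_eq, le_bot_iff] at this
  exact this

/-- Sup of grid pieces over a rectangle. -/
def gridSup (V W : ℕ → Submodule K E) (hV : Monotone V) (hW : Monotone W) (a b : ℕ) :
    Submodule K E :=
  (Finset.range a).sup fun p => (Finset.range b).sup fun q => gridC V W hV hW p q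

lemma gridSup_succ_left (V W : ℕ → Submodule K E) (hV : Monotone V) (hW : Monotone W) (a b : ℕ) :
    gridSup V W hV hW (a+1) b =
      ((Finset.range b).sup fun q => gridC V W hV hW a q) ⊔ gridSup V W hV hW a b := by
  unfold gridSup
  rw [Finset.range_add_one, Finset.sup_insert]

lemma col_succ (V W : ℕ → Submodule K E) (hV : Monotone V) (hW : Monotone W) (a b : ℕ) :
    ((Finset.range (b+1)).sup fun q => gridC V W hV hW a q) =
      gridC V W hV hW a b ⊔ ((Finset.range b).sup fun q => gridC V W hV hW a q) := by
  rw [Finset.range_add_one, Finset.sup_insert]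

lemma gridSup_mono_right (V W : ℕ → Submodule K E) (hV : Monotone V) (hW : Monotone W)
    (a : ℕ) {b b' : ℕ} (h : b ≤ b') :
    gridSup V W hV hW a b ≤ gridSup V W hV hW a b' := by
  apply Finset.sup_mono_fun
  intro p _
  exact Finset.sup_mono (Finset.range_subset_range.2 h)

lemma grid_eq_sup {V W : ℕ → Submodule K E} (hV : Monotone V) (hW : Monotone W)
    (hV0 : V 0 = ⊥) (hW0 : W 0 = ⊥) :
    ∀ p q, V p ⊓ W q = gridSup V W hV hW (p+1) (q+1) := by
  intro p q
  induction p generalizing q with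
  | zero =>
    rw [hV0, bot_inf_eq]
    symm
    rw [← le_bot_iff]
    apply Finset.sup_le
    intro p' hp'
    apply Finset.sup_le
    intro q' _
    rw [Finset.mem_range] at hp'
    have : p' = 0 := by omega
    subst this
    rw [gridC_zero_left hV hW hV0]
  | succ p IHp =>
    induction q with
    | zero =>
      rw [hW0, inf_bot_eq]
      symm
      rw [← le_bot_iff]
      apply Finset.sup_le
      intro p' _
      apply Finset.sup_le
      intro q' hq'
      rw [Finset.mem_range] at hq'
      have : q' = 0 := by omega
      subst this
      rw [gridC_zero_right hV hW hW0]
    | succ q IHq =>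
      have hspec := (gridC_spec V W hV hW (p+1) (q+1)).2.2
      simp only [Nat.add_sub_cancel] at hspec
      rw [← hspec, IHp (q+1), IHq]
      rw [gridSup_succ_left V W hV hW (p+1) (q+2), col_succ V W hV hW (p+1) (q+1),
          gridSup_succ_left V W hV hW (p+1) (q+1)]
      have hYX : gridSup V W hV hW (p+1) (q+1) ≤ gridSup V W hV hW (p+1) (q+2) :=
        gridSup_mono_right V W hV hW _ (by omega)
      set X := gridSup V W hV hW (p+1) (q+2) with hX
      set Y := gridSup V W hV hW (p+1) (q+1) with hY
      set Z := (Finset.range (q+1)).sup fun q' => gridC V W hV hW (p+1) q' with hZ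
      set c := gridC V W hV hW (p+1) (q+1) with hc
      apply le_antisymm
      · apply sup_le (sup_le le_sup_right (sup_le (le_sup_of_le_left le_sup_right) (le_trans hYX le_sup_right)))
        exact le_sup_of_le_left le_sup_left
      · exact sup_le (sup_le le_sup_right (le_sup_of_le_left (le_sup_of_le_right le_sup_left)))
          (le_sup_of_le_left le_sup_left)

section rank
variable [FiniteDimensional K E]

lemma grid_inf_inf {V W : ℕ → Submodule K E} (hV : Monotone V) (hW : Monotone W) (p q : ℕ) :
    (V p ⊓ W (q+1)) ⊓ (V (p+1) ⊓ W q) = V p ⊓ W q := by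
  apply le_antisymm
  · rintro x ⟨⟨h1, _⟩, ⟨_, h4⟩⟩
    exact ⟨h1, h4⟩
  · rintro x ⟨h1, h2⟩
    exact ⟨⟨h1, hW (by omega) h2⟩, ⟨hV (by omega) h1, h2⟩⟩

lemma grid_rank_rec {V W : ℕ → Submodule K E} (hV : Monotone V) (hW : Monotone W) (p q : ℕ) :
    finrank K ↥(V (p+1) ⊓ W (q+1)) + finrank K ↥(V p ⊓ W q) =
      finrank K ↥(gridC V W hV hW (p+1) (q+1)) +
        (finrank K ↥(V p ⊓ W (q+1)) + finrank K ↥(V (p+1) ⊓ W q)) := by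
  have hspec := (gridC_spec V W hV hW (p+1) (q+1)).2.2
  have hdisj := (gridC_spec V W hV hW (p+1) (q+1)).2.1
  simp only [Nat.add_sub_cancel] at hspec hdisj
  have h1 : finrank K ↥(V (p+1) ⊓ W (q+1)) =
      finrank K ↥((V p ⊓ W (q+1)) ⊔ (V (p+1) ⊓ W q)) + finrank K ↥(gridC V W hV hW (p+1) (q+1)) := by
    rw [← hspec, ← Submodule.finrank_sup_add_finrank_inf_eq, hdisj, finrank_bot, add_zero]
  have h2 : finrank K ↥((V p ⊓ W (q+1)) ⊔ (V (p+1) ⊓ W q)) + finrank K ↥(V p ⊓ W q) =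
      finrank K ↥(V p ⊓ W (q+1)) + finrank K ↥(V (p+1) ⊓ W q) := by
    rw [← grid_inf_inf hV hW p q]
    exact Submodule.finrank_sup_add_finrank_inf_eq _ _
  omega

/-- Sum of ranks of grid pieces over a rectangle. -/
def gridRankSum (V W : ℕ → Submodule K E) (hV : Monotone V) (hW : Monotone W) (a b : ℕ) : ℕ :=
  ∑ p ∈ Finset.range a, ∑ q ∈ Finset.range b, finrank K ↥(gridC V W hV hW p q)

lemma gridRankSum_succ_left (V W : ℕ → Submodule K E) (hV : Monotone V) (hW : Monotone W) (a b : ℕ) :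
    gridRankSum V W hV hW (a+1) b =
      (∑ q ∈ Finset.range b, finrank K ↥(gridC V W hV hW a q)) + gridRankSum V W hV hW a b := by
  unfold gridRankSum
  rw [Finset.range_add_one, Finset.sum_insert Finset.notMem_range_self]

lemma grid_rank_eq_sum {V W : ℕ → Submodule K E} (hV : Monotone V) (hW : Monotone W)
    (hV0 : V 0 = ⊥) (hW0 : W 0 = ⊥) :
    ∀ p q, finrank K ↥(V p ⊓ W q) = gridRankSum V W hV hW (p+1) (q+1) := by
  intro p q
  induction p generalizing q with
  | zero =>
    rw [hV0, bot_inf_eq, finrank_bot]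
    symm
    apply Finset.sum_eq_zero
    intro p' hp'
    rw [Finset.mem_range] at hp'
    have : p' = 0 := by omega
    subst this
    apply Finset.sum_eq_zero
    intro q' _
    rw [gridC_zero_left hV hW hV0, finrank_bot]
  | succ p IHp =>
    induction q with
    | zero =>
      rw [hW0, inf_bot_eq, finrank_bot]
      symm
      apply Finset.sum_eq_zero
      intro p' _
      apply Finset.sum_eq_zero
      intro q' hq'
      rw [Finset.mem_range] at hq'
      have : q' = 0 := by omega
      subst this
      rw [gridC_zero_right hV hW hW0, finrank_bot]
    | succ q IHq =>
      show finrank K ↥(V (p+1) ⊓ W (q+1)) = gridRankSum V W hV hW (p+2) (q+2)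
      have hrec := grid_rank_rec hV hW p q
      have e1 : gridRankSum V W hV hW (p+2) (q+2) =
          (∑ q' ∈ Finset.range (q+2), finrank K ↥(gridC V W hV hW (p+1) q')) +
            gridRankSum V W hV hW (p+1) (q+2) := gridRankSum_succ_left V W hV hW (p+1) (q+2)
      have e2 : gridRankSum V W hV hW (p+2) (q+1) =
          (∑ q' ∈ Finset.range (q+1), finrank K ↥(gridC V W hV hW (p+1) q')) +
            gridRankSum V W hV hW (p+1) (q+1) := gridRankSum_succ_left V W hV hW (p+1) (q+1)
      have e3 : (∑ q' ∈ Finset.range (q+2), finrank K ↥(gridC V W hV hW (p+1) q')) =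
          finrank K ↥(gridC V W hV hW (p+1) (q+1)) +
            ∑ q' ∈ Finset.range (q+1), finrank K ↥(gridC V W hV hW (p+1) q') := by
        rw [Finset.range_add_one, Finset.sum_insert Finset.notMem_range_self]
      have i1 := IHp q
      have i2 : finrank K ↥(V p ⊓ W (q+1)) = gridRankSum V W hV hW (p+1) (q+2) := IHp (q+1)
      have i3 : finrank K ↥(V (p+1) ⊓ W q) = gridRankSum V W hV hW (p+2) (q+1) := IHq
      omega

end rank

section core
variable [FiniteDimensional K E]

theorem core_exists (V V' W : ℕ → Submodule K E) (hV : Monotone V) (hV' : Monotone V')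
    (hW : Monotone W) (hV0 : V 0 = ⊥) (hV'0 : V' 0 = ⊥) (hW0 : W 0 = ⊥)
    (P Q : ℕ) (hVP : V P = ⊤) (hV'P : V' P = ⊤) (hWQ : W Q = ⊤)
    (hdim : ∀ p q, finrank K ↥(V p ⊓ W q) = finrank K ↥(V' p ⊓ W q)) :
    ∃ g : E ≃ₗ[K] E,
      (∀ q, q ≤ Q → (W q).map (g : E →ₗ[K] E) = W q) ∧
      (∀ p, p ≤ P → (V p).map (g : E →ₗ[K] E) = V' p) := by
  classical
  have hn : ∀ p q, finrank K ↥(gridC V W hV hW p q) = finrank K ↥(gridC V' W hV' hW p q) := by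
    intro p q
    match p, q with
    | 0, q => rw [gridC_zero_left hV hW hV0, gridC_zero_left hV' hW hV'0]
    | p+1, 0 => rw [gridC_zero_right hV hW hW0, gridC_zero_right hV' hW hW0]
    | p+1, q+1 =>
      have r1 := grid_rank_rec hV hW p q
      have r2 := grid_rank_rec hV' hW p q
      have d1 := hdim (p+1) (q+1)
      have d2 := hdim p q
      have d3 := hdim p (q+1)
      have d4 := hdim (p+1) q
      omega
  set n : Fin (P+1) → Fin (Q+1) → ℕ :=
    fun p q => finrank K ↥(gridC V W hV hW p.1 q.1) with hn_def
  let S := (p : Fin (P+1)) × (q : Fin (Q+1)) × Fin (n p q)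
  let bv : S → E := fun s => ((Module.finBasis K ↥(gridC V W hV hW s.1.1 s.2.1.1)) s.2.2 : E)
  let bv' : S → E := fun s =>
    ((Module.finBasis K ↥(gridC V' W hV' hW s.1.1 s.2.1.1))
      (Fin.cast (hn s.1.1 s.2.1.1) s.2.2) : E)
  have htop : gridSup V W hV hW (P+1) (Q+1) = ⊤ := by
    rw [← grid_eq_sup hV hW hV0 hW0 P Q, hVP, hWQ, top_inf_eq]
  have htop' : gridSup V' W hV' hW (P+1) (Q+1) = ⊤ := by
    rw [← grid_eq_sup hV' hW hV'0 hW0 P Q, hV'P, hWQ, top_inf_eq]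
  have hspan : ⊤ ≤ Submodule.span K (Set.range bv) := by
    rw [← htop]
    apply Finset.sup_le
    intro p' hp'
    apply Finset.sup_le
    intro q' hq'
    rw [Finset.mem_range] at hp' hq'
    rw [← span_finBasis (gridC V W hV hW p' q')]
    apply Submodule.span_mono
    rintro x ⟨i, rfl⟩
    exact ⟨⟨⟨p', hp'⟩, ⟨q', hq'⟩, i⟩, rfl⟩
  have hspan' : ⊤ ≤ Submodule.span K (Set.range bv') := by
    rw [← htop']
    apply Finset.sup_le
    intro p' hp'
    apply Finset.sup_le
    intro q' hq'
    rw [Finset.mem_range] at hp' hq'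
    rw [← span_finBasis (gridC V' W hV' hW p' q')]
    apply Submodule.span_mono
    rintro x ⟨i, rfl⟩
    exact ⟨⟨⟨p', hp'⟩, ⟨q', hq'⟩, Fin.cast (hn p' q').symm i⟩, rfl⟩
  have hcard : Fintype.card S = finrank K E := by
    have hS : Fintype.card S = ∑ p : Fin (P+1), ∑ q : Fin (Q+1), n p q := by
      rw [Fintype.card_sigma]
      congr 1
      funext p
      rw [Fintype.card_sigma]
      congr 1
      funext q
      rw [Fintype.card_fin]
    rw [hS]
    have h2 : ∀ p : Fin (P+1), ∑ q : Fin (Q+1), n p q =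
        ∑ q ∈ Finset.range (Q+1), finrank K ↥(gridC V W hV hW p.1 q) :=
      fun p => Fin.sum_univ_eq_sum_range (fun q => finrank K ↥(gridC V W hV hW p.1 q)) (Q+1)
    calc ∑ p : Fin (P+1), ∑ q : Fin (Q+1), n p q
        = ∑ p : Fin (P+1), ∑ q ∈ Finset.range (Q+1), finrank K ↥(gridC V W hV hW p.1 q) := by
          exact Finset.sum_congr rfl (fun p _ => h2 p)
      _ = ∑ p ∈ Finset.range (P+1), ∑ q ∈ Finset.range (Q+1), finrank K ↥(gridC V W hV hW p q) :=
          Fin.sum_univ_eq_sum_range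
            (fun p => ∑ q ∈ Finset.range (Q+1), finrank K ↥(gridC V W hV hW p q)) (P+1)
      _ = gridRankSum V W hV hW (P+1) (Q+1) := rfl
      _ = finrank K ↥(V P ⊓ W Q) := (grid_rank_eq_sum hV hW hV0 hW0 P Q).symm
      _ = finrank K E := by rw [hVP, hWQ, top_inf_eq, finrank_top]
  let bb : Basis S K E := basisOfTopLeSpanOfCardEqFinrank bv hspan hcard
  let bb' : Basis S K E := basisOfTopLeSpanOfCardEqFinrank bv' hspan' hcard
  let g : E ≃ₗ[K] E := bb.equiv bb' (Equiv.refl S)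
  have hbbc : ⇑bb = bv := coe_basisOfTopLeSpanOfCardEqFinrank bv hspan hcard
  have hbbc' : ⇑bb' = bv' := coe_basisOfTopLeSpanOfCardEqFinrank bv' hspan' hcard
  have hg : ∀ s, g (bv s) = bv' s := by
    intro s
    rw [← hbbc, ← hbbc']
    exact bb.equiv_apply s bb' (Equiv.refl S)
  have hgs : ∀ s, g.symm (bv' s) = bv s := by
    intro s
    rw [← hbbc, ← hbbc']
    show (bb.equiv bb' (Equiv.refl S)).symm (bb' s) = bb s
    rw [Basis.equiv_symm]
    exact bb'.equiv_apply s bb (Equiv.refl S).symm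
  have hmemC' : ∀ (p' q' : ℕ) (hp : p' < P+1) (hq : q' < Q+1)
      (i : Fin (n ⟨p', hp⟩ ⟨q', hq⟩)),
      g (bv ⟨⟨p', hp⟩, ⟨q', hq⟩, i⟩) ∈ gridC V' W hV' hW p' q' := by
    intro p' q' hp hq i
    rw [hg]
    exact Subtype.coe_prop _
  have hmemC : ∀ (p' q' : ℕ) (hp : p' < P+1) (hq : q' < Q+1)
      (i : Fin (n ⟨p', hp⟩ ⟨q', hq⟩)),
      g.symm (bv' ⟨⟨p', hp⟩, ⟨q', hq⟩, i⟩) ∈ gridC V W hV hW p' q' := by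
    intro p' q' hp hq i
    rw [hgs]
    exact Subtype.coe_prop _
  have key : ∀ p q : ℕ, p ≤ P → q ≤ Q →
      (V p ⊓ W q).map (g : E →ₗ[K] E) ≤ V' p ⊓ W q := by
    intro p q hp hq
    rw [Submodule.map_le_iff_le_comap, grid_eq_sup hV hW hV0 hW0 p q]
    apply Finset.sup_le
    intro p' hp'
    apply Finset.sup_le
    intro q' hq'
    rw [Finset.mem_range] at hp' hq'
    have hpP : p' < P + 1 := by omega
    have hqQ : q' < Q + 1 := by omega
    rw [← span_finBasis (gridC V W hV hW p' q'), Submodule.span_le]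
    rintro x ⟨i, rfl⟩
    rw [SetLike.mem_coe, Submodule.mem_comap]
    have hx := hmemC' p' q' hpP hqQ i
    have hle := (gridC_spec V' W hV' hW p' q').1 hx
    exact ⟨hV' (by omega) hle.1, hW (by omega) hle.2⟩
  have key' : ∀ p q : ℕ, p ≤ P → q ≤ Q →
      (V' p ⊓ W q).map (g.symm : E →ₗ[K] E) ≤ V p ⊓ W q := by
    intro p q hp hq
    rw [Submodule.map_le_iff_le_comap, grid_eq_sup hV' hW hV'0 hW0 p q]
    apply Finset.sup_le
    intro p' hp'
    apply Finset.sup_le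
    intro q' hq'
    rw [Finset.mem_range] at hp' hq'
    have hpP : p' < P + 1 := by omega
    have hqQ : q' < Q + 1 := by omega
    rw [← span_finBasis (gridC V' W hV' hW p' q'), Submodule.span_le]
    rintro x ⟨i, rfl⟩
    rw [SetLike.mem_coe, Submodule.mem_comap]
    have hx := hmemC p' q' hpP hqQ (Fin.cast (hn p' q').symm i)
    have hle := (gridC_spec V W hV hW p' q').1 hx
    exact ⟨hV (by omega) hle.1, hW (by omega) hle.2⟩
  have minv : ∀ (A : Submodule K E),
      (A.map (g.symm : E →ₗ[K] E)).map (g : E →ₗ[K] E) = A := by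
    intro A
    ext x
    constructor
    · rintro ⟨y, ⟨z, hz, rfl⟩, rfl⟩
      simpa [g.apply_symm_apply] using hz
    · intro hx
      exact ⟨g.symm x, ⟨x, hx, rfl⟩, g.apply_symm_apply x⟩
  refine ⟨g, ?_, ?_⟩
  · intro q hq
    have h1 := key P q le_rfl hq
    rw [hVP, top_inf_eq] at h1
    have h1' : (W q).map (g : E →ₗ[K] E) ≤ W q := by
      refine le_trans h1 ?_
      rw [hV'P, top_inf_eq]
    have h2 := key' P q le_rfl hq
    rw [hV'P, top_inf_eq] at h2
    have h2' : (W q).map (g.symm : E →ₗ[K] E) ≤ W q := by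
      refine le_trans h2 ?_
      rw [hVP, top_inf_eq]
    refine le_antisymm h1' ?_
    conv_lhs => rw [← minv (W q)]
    exact Submodule.map_mono h2'
  · intro p hp
    have h1 := key p Q hp le_rfl
    rw [hWQ, inf_top_eq, inf_top_eq] at h1
    have h2 := key' p Q hp le_rfl
    rw [hWQ, inf_top_eq, inf_top_eq] at h2
    refine le_antisymm h1 ?_
    conv_lhs => rw [← minv (V' p)]
    exact Submodule.map_mono h2

end core

section poly

def gradedPiece' (k : Type) [Field k] {B : Type} (d : B → ℕ) (v : ℕ) :
    Submodule k (B → Polynomial k) :=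
  ⨅ b : B, Submodule.comap
    (LinearMap.proj b : (B → Polynomial k) →ₗ[k] Polynomial k)
    (if d b ≤ v then Submodule.span k {Polynomial.monomial (v - d b) (1 : k)} else ⊥)

variable {k : Type} [Field k] {B0 : Type} (d0 : B0 → ℕ)

lemma mem_gp {f : B0 → Polynomial k} {v : ℕ} :
    f ∈ gradedPiece' k d0 v ↔ ∀ b, f b ∈
      (if d0 b ≤ v then Submodule.span k {Polynomial.monomial (v - d0 b) (1 : k)} else ⊥) := by
  simp [gradedPiece', Submodule.mem_iInf, Submodule.mem_comap, LinearMap.proj_apply]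

lemma gp_high {f : B0 → Polynomial k} {v : ℕ} (hf : f ∈ gradedPiece' k d0 v) {b : B0}
    (hb : ¬ d0 b ≤ v) : f b = 0 := by
  have := (mem_gp d0).1 hf b
  rw [if_neg hb] at this
  simpa using this

lemma gp_low {f : B0 → Polynomial k} {v : ℕ} (hf : f ∈ gradedPiece' k d0 v) {b : B0}
    (hb : d0 b ≤ v) : ∃ c : k, f b = Polynomial.monomial (v - d0 b) c := by
  have := (mem_gp d0).1 hf b
  rw [if_pos hb] at this
  obtain ⟨c, hc⟩ := Submodule.mem_span_singleton.1 this
  exact ⟨c, by rw [← hc, Polynomial.smul_monomial, smul_eq_mul, mul_one]⟩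

/-- Reading off the coefficients of an element of the `v`-th graded piece. -/
def theta (v : ℕ) : (B0 → Polynomial k) →ₗ[k] (B0 → k) :=
  LinearMap.pi (fun b => (Polynomial.lcoeff k (v - d0 b)).comp (LinearMap.proj b))

lemma theta_apply (v : ℕ) (f : B0 → Polynomial k) (b : B0) :
    theta d0 v f b = (f b).coeff (v - d0 b) := rfl

lemma theta_inj {v : ℕ} {f : B0 → Polynomial k} (hf : f ∈ gradedPiece' k d0 v)
    (h0 : theta d0 v f = 0) : f = 0 := by
  funext b
  by_cases hb : d0 b ≤ v
  · obtain ⟨c, hc⟩ := gp_low d0 hf hb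
    have hcc : theta d0 v f b = c := by
      rw [theta_apply, hc, Polynomial.coeff_monomial, if_pos rfl]
    have : c = 0 := by rw [← hcc, h0]; rfl
    rw [hc, this, Polynomial.monomial_zero_right]; rfl
  · rw [gp_high d0 hf hb]; rfl

lemma theta_smul {u v : ℕ} (huv : u ≤ v) {f : B0 → Polynomial k}
    (hf : f ∈ gradedPiece' k d0 u) :
    theta d0 v ((Polynomial.monomial (v - u) (1 : k) : Polynomial k) • f) = theta d0 u f := by
  funext b
  rw [theta_apply, theta_apply]
  have hsm : ((Polynomial.monomial (v - u) (1 : k) : Polynomial k) • f) b =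
      Polynomial.monomial (v - u) (1 : k) * f b := rfl
  rw [hsm]
  by_cases hb : d0 b ≤ u
  · obtain ⟨c, hc⟩ := gp_low d0 hf hb
    rw [hc, Polynomial.monomial_mul_monomial, one_mul]
    have he : (v - u) + (u - d0 b) = v - d0 b := by omega
    rw [he, Polynomial.coeff_monomial, if_pos rfl, Polynomial.coeff_monomial, if_pos rfl]
  · rw [gp_high d0 hf hb, mul_zero]
    simp

/-- The filtration subspaces of `B0 → k` by degree. -/
def Wh (j : ℕ) : Submodule k (B0 → k) :=
  Submodule.pi Set.univ (fun b => if d0 b ≤ j then (⊤ : Submodule k k) else ⊥)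

lemma mem_Wh {j : ℕ} {a : B0 → k} : a ∈ Wh d0 j ↔ ∀ b, ¬ d0 b ≤ j → a b = 0 := by
  rw [Wh, Submodule.mem_pi]
  constructor
  · intro h b hb
    have := h b (Set.mem_univ b)
    rw [if_neg hb] at this
    simpa using this
  · intro h b _
    by_cases hb : d0 b ≤ j
    · rw [if_pos hb]; trivial
    · rw [if_neg hb]
      simpa using h b hb

lemma Wh_mono : Monotone (Wh d0 (k := k)) := by
  intro j j' hj a ha
  rw [mem_Wh] at ha ⊢
  intro b hb
  exact ha b (fun hle => hb (le_trans hle hj))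

lemma Wh_top {j : ℕ} (hj : ∀ b, d0 b ≤ j) : Wh d0 (k := k) j = ⊤ := by
  rw [eq_top_iff]
  intro a _
  rw [mem_Wh]
  intro b hb
  exact absurd (hj b) hb

/-- The submodule of families of polynomials all divisible by `X^m`. -/
def Dm (m : ℕ) : Submodule k (B0 → Polynomial k) :=
  Submodule.map ((((Polynomial.X : Polynomial k)^m) •
    (LinearMap.id : (B0 → Polynomial k) →ₗ[Polynomial k] (B0 → Polynomial k))).restrictScalars k) ⊤

lemma mem_Dm {m : ℕ} {f : B0 → Polynomial k} :
    f ∈ Dm (k := k) (B0 := B0) m ↔ ∃ g : B0 → Polynomial k,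
      ((Polynomial.X : Polynomial k)^m) • g = f := by
  constructor
  · rintro ⟨g, -, rfl⟩
    exact ⟨g, rfl⟩
  · rintro ⟨g, rfl⟩
    exact ⟨g, trivial, rfl⟩

lemma Dm_map {m : ℕ} (μ : (B0 → Polynomial k) ≃ₗ[Polynomial k] (B0 → Polynomial k)) :
    (Dm m).map (μ.toLinearMap.restrictScalars k) = Dm m := by
  apply le_antisymm
  · rintro x ⟨f, hf, rfl⟩
    obtain ⟨g, rfl⟩ := mem_Dm.1 hf
    rw [mem_Dm]
    exact ⟨μ g, by simpa using (map_smul μ (((Polynomial.X : Polynomial k))^m) g).symm ▸ rfl⟩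
  · intro x hx
    obtain ⟨g, rfl⟩ := mem_Dm.1 hx
    refine ⟨((Polynomial.X : Polynomial k)^m) • (μ.symm g), mem_Dm.2 ⟨μ.symm g, rfl⟩, ?_⟩
    show μ (((Polynomial.X : Polynomial k)^m) • (μ.symm g)) = _
    rw [map_smul, μ.apply_symm_apply]

lemma map_inf_Dm (v j : ℕ) (p : Submodule k (B0 → Polynomial k))
    (hp : p ≤ gradedPiece' k d0 v) :
    (p ⊓ Dm (v - j)).map (theta d0 v) = p.map (theta d0 v) ⊓ Wh d0 j := by
  apply le_antisymm
  · rintro x ⟨f, ⟨hfp, hfD⟩, rfl⟩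
    refine ⟨⟨f, hfp, rfl⟩, ?_⟩
    rw [SetLike.mem_coe, mem_Wh]
    intro b hb
    rw [theta_apply]
    obtain ⟨gg, hgg⟩ := mem_Dm.1 (SetLike.mem_coe.1 hfD)
    have hfb : f b = (Polynomial.X : Polynomial k)^(v-j) * gg b := by rw [← hgg]; rfl
    by_cases hbv : d0 b ≤ v
    · rw [hfb, mul_comm, Polynomial.coeff_mul_X_pow', if_neg (by omega)]
    · rw [gp_high d0 (hp hfp) hbv]
      simp
  · rintro x ⟨⟨f, hfp, rfl⟩, hxW⟩
    refine ⟨f, ⟨hfp, ?_⟩, rfl⟩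
    rw [SetLike.mem_coe, mem_Dm]
    classical
    refine ⟨fun b => if hb : d0 b ≤ v then
      Polynomial.monomial ((v - d0 b) - (v - j)) ((f b).coeff (v - d0 b)) else 0, ?_⟩
    funext b
    show (Polynomial.X : Polynomial k)^(v-j) * _ = f b
    dsimp only
    by_cases hb : d0 b ≤ v
    · rw [dif_pos hb]
      obtain ⟨c, hc⟩ := gp_low d0 (hp hfp) hb
      have hcoeff : (f b).coeff (v - d0 b) = c := by
        rw [hc, Polynomial.coeff_monomial, if_pos rfl]
      by_cases hbj : d0 b ≤ j
      · rw [hcoeff, Polynomial.X_pow_eq_monomial, Polynomial.monomial_mul_monomial, one_mul]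
        have he : (v - j) + ((v - d0 b) - (v - j)) = v - d0 b := by omega
        rw [he]
        exact hc.symm
      · have hc0 : c = 0 := by
          have := (mem_Wh d0).1 (SetLike.mem_coe.1 hxW) b hbj
          rw [theta_apply] at this
          rw [← hcoeff, this]
        rw [hcoeff, hc0, Polynomial.monomial_zero_right, mul_zero, hc, hc0,
          Polynomial.monomial_zero_right]
    · rw [dif_neg hb, mul_zero, gp_high d0 (hp hfp) hb]

end poly

section mu

variable {k : Type} [Field k] {B0 : Type} [Fintype B0] (d0 : B0 → ℕ)

/-- Matrices compatible with the degree filtration. -/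
def Triangular (c : B0 → B0 → k) : Prop := ∀ b' b, ¬ d0 b' ≤ d0 b → c b' b = 0

/-- The `k[x]`-linear endomorphism attached to a triangular matrix over `k`. -/
def muL (c : B0 → B0 → k) : (B0 → Polynomial k) →ₗ[Polynomial k] (B0 → Polynomial k) where
  toFun f := fun b' => ∑ b, Polynomial.C (c b' b) *
    ((Polynomial.X : Polynomial k) ^ (d0 b - d0 b') * f b)
  map_add' f g := by
    funext b'
    simp only [Pi.add_apply, mul_add, Finset.sum_add_distrib]
  map_smul' p f := by
    funext b'
    simp only [Pi.smul_apply, smul_eq_mul, RingHom.id_apply]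
    rw [Finset.mul_sum]
    exact Finset.sum_congr rfl fun b _ => by ring

lemma muL_apply (c : B0 → B0 → k) (f : B0 → Polynomial k) (b' : B0) :
    muL d0 c f b' = ∑ b, Polynomial.C (c b' b) *
      ((Polynomial.X : Polynomial k) ^ (d0 b - d0 b') * f b) := rfl

lemma muL_comp {c c' : B0 → B0 → k} (hc : Triangular d0 c) (hc' : Triangular d0 c')
    (f : B0 → Polynomial k) :
    muL d0 c (muL d0 c' f) = muL d0 (fun b' b2 => ∑ b, c b' b * c' b b2) f := by
  funext b'
  rw [muL_apply]
  have lhs_eq : ∀ b, Polynomial.C (c b' b) *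
      ((Polynomial.X : Polynomial k) ^ (d0 b - d0 b') * muL d0 c' f b) =
      ∑ b2, Polynomial.C (c b' b) * ((Polynomial.X : Polynomial k) ^ (d0 b - d0 b') *
        (Polynomial.C (c' b b2) * ((Polynomial.X : Polynomial k) ^ (d0 b2 - d0 b) * f b2))) := by
    intro b
    rw [muL_apply, Finset.mul_sum, Finset.mul_sum]
  rw [Finset.sum_congr rfl (fun b _ => lhs_eq b), Finset.sum_comm]
  rw [muL_apply]
  apply Finset.sum_congr rfl
  intro b2 _
  rw [map_sum, Finset.sum_mul]
  apply Finset.sum_congr rfl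
  intro b _
  by_cases hz : c b' b = 0
  · simp [hz]
  · by_cases hz' : c' b b2 = 0
    · simp [hz']
    · have h1 : d0 b' ≤ d0 b := by by_contra h; exact hz (hc b' b h)
      have h2 : d0 b ≤ d0 b2 := by by_contra h; exact hz' (hc' b b2 h)
      have hexp : (d0 b - d0 b') + (d0 b2 - d0 b) = d0 b2 - d0 b' := by omega
      rw [map_mul, ← hexp, pow_add]
      ring

lemma muL_id [DecidableEq B0] (f : B0 → Polynomial k) :
    muL d0 (fun b' b => if b' = b then (1:k) else 0) f = f := by
  funext b'
  rw [muL_apply]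
  rw [Finset.sum_eq_single b']
  · simp
  · intro b _ hb
    rw [if_neg (Ne.symm hb)]
    simp
  · intro h
    exact absurd (Finset.mem_univ b') h

lemma muL_gp {c : B0 → B0 → k} (hc : Triangular d0 c) {v : ℕ} {f : B0 → Polynomial k}
    (hf : f ∈ gradedPiece' k d0 v) : muL d0 c f ∈ gradedPiece' k d0 v := by
  rw [mem_gp]
  intro b'
  rw [muL_apply]
  by_cases hb' : d0 b' ≤ v
  · rw [if_pos hb']
    apply Submodule.sum_mem
    intro b _
    by_cases hz : c b' b = 0
    · simp [hz]
    · have hdb : d0 b' ≤ d0 b := by by_contra h; exact hz (hc b' b h)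
      by_cases hbv : d0 b ≤ v
      · obtain ⟨a, ha⟩ := gp_low d0 hf hbv
        rw [ha, Polynomial.X_pow_eq_monomial, Polynomial.monomial_mul_monomial, one_mul]
        have hexp : (d0 b - d0 b') + (v - d0 b) = v - d0 b' := by omega
        rw [hexp, Polynomial.C_mul_monomial]
        exact Submodule.mem_span_singleton.2
          ⟨c b' b * a, by rw [Polynomial.smul_monomial, smul_eq_mul, mul_one]⟩
      · rw [gp_high d0 hf hbv, mul_zero, mul_zero]
        exact Submodule.zero_mem _
  · rw [if_neg hb', Submodule.mem_bot]
    apply Finset.sum_eq_zero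
    intro b _
    by_cases hz : c b' b = 0
    · simp [hz]
    · have hdb : d0 b' ≤ d0 b := by by_contra h; exact hz (hc b' b h)
      rw [gp_high d0 hf (by omega), mul_zero, mul_zero]

lemma muL_theta {c : B0 → B0 → k} (hc : Triangular d0 c)
    (g : (B0 → k) ≃ₗ[k] (B0 → k)) (hg : ∀ (a : B0 → k) (b' : B0), g a b' = ∑ b, a b * c b' b)
    {v : ℕ} {f : B0 → Polynomial k} (hf : f ∈ gradedPiece' k d0 v) :
    theta d0 v (muL d0 c f) = g (theta d0 v f) := by
  funext b'
  rw [theta_apply, hg, muL_apply, Polynomial.finset_sum_coeff]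
  apply Finset.sum_congr rfl
  intro b _
  rw [theta_apply]
  by_cases hz : c b' b = 0
  · simp [hz]
  · have hdb : d0 b' ≤ d0 b := by by_contra h; exact hz (hc b' b h)
    by_cases hbv : d0 b ≤ v
    · obtain ⟨a, ha⟩ := gp_low d0 hf hbv
      rw [ha, Polynomial.X_pow_eq_monomial, Polynomial.monomial_mul_monomial, one_mul,
        Polynomial.C_mul_monomial]
      have hexp : (d0 b - d0 b') + (v - d0 b) = v - d0 b' := by omega
      rw [hexp]
      simp [Polynomial.coeff_monomial]
      ring
    · rw [gp_high d0 hf hbv]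
      simp

end mu

section assemble

lemma mapped_symm {K : Type} [Field K] {E : Type} [AddCommGroup E] [Module K E]
    (g : E ≃ₗ[K] E) (A : Submodule K E) (hA : A.map (g : E →ₗ[K] E) = A) :
    A.map (g.symm : E →ₗ[K] E) = A := by
  apply le_antisymm
  · rintro x ⟨y, hy, rfl⟩
    rw [← hA] at hy
    obtain ⟨z, hz, rfl⟩ := hy
    simpa [g.symm_apply_apply] using hz
  · intro x hx
    exact ⟨g x, hA ▸ ⟨x, hx, rfl⟩, g.symm_apply_apply x⟩

variable {k : Type} [Field k] {B0 B1 : Type} [Fintype B0] [DecidableEq B0] [Finite B1]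
variable (d0 : B0 → ℕ) (d1 : B1 → ℕ)

lemma gp_eq (v : ℕ) : gradedPiece k d0 v = gradedPiece' k d0 v := rfl

lemma theta_injOn (v : ℕ) :
    ∀ x ∈ gradedPiece' k d0 v, theta d0 v x = 0 → x = 0 :=
  fun _ hx h => theta_inj d0 hx h

lemma fd_of_le_gp {v : ℕ} (p : Submodule k (B0 → Polynomial k))
    (hp : p ≤ gradedPiece' k d0 v) : FiniteDimensional k ↥p := by
  have hinj : Function.Injective ((theta d0 v).domRestrict p) := by
    intro x y hxy
    have h0 : theta d0 v ((x : B0 → Polynomial k) - (y : B0 → Polynomial k)) = 0 := by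
      rw [map_sub, sub_eq_zero]
      exact hxy
    have := theta_injOn d0 v _ (Submodule.sub_mem _ (hp x.2) (hp y.2)) h0
    exact Subtype.ext (by rwa [sub_eq_zero] at this)
  have e := LinearEquiv.ofInjective ((theta d0 v).domRestrict p) hinj
  exact Module.Finite.equiv e.symm

lemma invt_sameOrbit (V W : {V : {v : ℕ // v ∈ Set.range d1} → Submodule k (B0 → Polynomial k) //
      IsRelationFamily k d0 d1 V}) (h : sameOrbit k d0 d1 V W) :
    ∀ (v : {v : ℕ // v ∈ Set.range d1}) (j : ℕ),
      finrank k ↥(V.1 v ⊓ Dm (v.1 - j)) = finrank k ↥(W.1 v ⊓ Dm (v.1 - j)) := by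
  obtain ⟨μ, hgr, hmap⟩ := h
  intro v j
  set μr := μ.toLinearMap.restrictScalars k with hμr
  have hinjr : Function.Injective ⇑μr := fun x y hxy => μ.injective hxy
  have h1 : (V.1 v ⊓ Dm (v.1 - j)).map μr = W.1 v ⊓ Dm (v.1 - j) := by
    rw [Submodule.map_inf μr hinjr, hmap v, Dm_map]
  rw [← h1]
  exact (finrank_map_of_injOn μr ⊤ _ le_top
    (fun x _ hx => hinjr (by rw [hx]; exact (map_zero μr).symm))).symm

lemma invt_hard (V W : {V : {v : ℕ // v ∈ Set.range d1} → Submodule k (B0 → Polynomial k) //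
      IsRelationFamily k d0 d1 V})
    (h : ∀ (v : {v : ℕ // v ∈ Set.range d1}) (j : ℕ),
      finrank k ↥(V.1 v ⊓ Dm (v.1 - j)) = finrank k ↥(W.1 v ⊓ Dm (v.1 - j))) :
    sameOrbit k d0 d1 V W := by
  classical
  haveI : Finite {v : ℕ // v ∈ Set.range d1} := (Set.finite_range d1).to_subtype
  haveI : Fintype {v : ℕ // v ∈ Set.range d1} := Fintype.ofFinite _
  obtain ⟨N1, hN1⟩ := Finite.exists_le (fun v : {v : ℕ // v ∈ Set.range d1} => v.1)
  obtain ⟨N0, hN0⟩ := Finite.exists_le d0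
  set Vt : {v : ℕ // v ∈ Set.range d1} → Submodule k (B0 → k) :=
    fun v => (V.1 v).map (theta d0 v.1) with hVt
  set Wt : {v : ℕ // v ∈ Set.range d1} → Submodule k (B0 → k) :=
    fun v => (W.1 v).map (theta d0 v.1) with hWt
  have hmonoT : ∀ (U : {V : {v : ℕ // v ∈ Set.range d1} → Submodule k (B0 → Polynomial k) //
      IsRelationFamily k d0 d1 V}) (u v : {v : ℕ // v ∈ Set.range d1}), u ≤ v →
      (U.1 u).map (theta d0 u.1) ≤ (U.1 v).map (theta d0 v.1) := by
    intro U u v huv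
    rintro x ⟨f, hf, rfl⟩
    have hchain := U.2.2.2 u v huv f hf
    exact ⟨_, hchain, theta_smul d0 huv (U.2.1 u hf)⟩
  have hVtmono : ∀ u v, u ≤ v → Vt u ≤ Vt v := hmonoT V
  have hWtmono : ∀ u v, u ≤ v → Wt u ≤ Wt v := hmonoT W
  have hdims : ∀ (v : {v : ℕ // v ∈ Set.range d1}) (j : ℕ),
      finrank k ↥(Vt v ⊓ Wh d0 j) = finrank k ↥(Wt v ⊓ Wh d0 j) := by
    intro v j
    rw [hVt, hWt]
    rw [← map_inf_Dm d0 v.1 j (V.1 v) (V.2.1 v), ← map_inf_Dm d0 v.1 j (W.1 v) (W.2.1 v)]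
    rw [finrank_map_of_injOn (theta d0 v.1) (gradedPiece' k d0 v.1) _
      (le_trans inf_le_left (V.2.1 v)) (theta_injOn d0 v.1)]
    rw [finrank_map_of_injOn (theta d0 v.1) (gradedPiece' k d0 v.1) _
      (le_trans inf_le_left (W.2.1 v)) (theta_injOn d0 v.1)]
    exact h v j
  -- the ℕ-indexed chains
  set Vh : ℕ → Submodule k (B0 → k) :=
    fun p => if N1 + 1 < p then ⊤ else ⨆ v : {v : ℕ // v ∈ Set.range d1}, ⨆ _ : v.1 < p, Vt v
    with hVh
  set Wth : ℕ → Submodule k (B0 → k) :=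
    fun p => if N1 + 1 < p then ⊤ else ⨆ v : {v : ℕ // v ∈ Set.range d1}, ⨆ _ : v.1 < p, Wt v
    with hWth
  set Wc : ℕ → Submodule k (B0 → k) :=
    fun q => match q with
      | 0 => ⊥
      | j+1 => Wh d0 j
    with hWc
  have hmonoCh : ∀ (T : {v : ℕ // v ∈ Set.range d1} → Submodule k (B0 → k)),
      (∀ u v, u ≤ v → T u ≤ T v) →
      Monotone (fun p => if N1 + 1 < p then (⊤ : Submodule k (B0 → k))
        else ⨆ v : {v : ℕ // v ∈ Set.range d1}, ⨆ _ : v.1 < p, T v) := by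
    intro T hT p p' hpp'
    dsimp only
    by_cases h1 : N1 + 1 < p
    · rw [if_pos h1, if_pos (by omega)]
    · by_cases h2 : N1 + 1 < p'
      · rw [if_neg h1, if_pos h2]; exact le_top
      · rw [if_neg h1, if_neg h2]
        exact iSup_le fun v => iSup_le fun hv => le_iSup_of_le v (le_iSup_of_le (by omega) le_rfl)
  have hVhmono : Monotone Vh := hmonoCh Vt hVtmono
  have hWthmono : Monotone Wth := hmonoCh Wt hWtmono
  have hWcmono : Monotone Wc := by
    intro q q' hqq'
    match q, q' with
    | 0, _ => exact bot_le
    | j+1, 0 => omega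
    | j+1, j'+1 => exact Wh_mono d0 (by omega)
  have hzeroCh : ∀ (T : {v : ℕ // v ∈ Set.range d1} → Submodule k (B0 → k)),
      (if N1 + 1 < 0 then (⊤ : Submodule k (B0 → k))
        else ⨆ v : {v : ℕ // v ∈ Set.range d1}, ⨆ _ : v.1 < 0, T v) = ⊥ := by
    intro T
    rw [if_neg (by omega)]
    exact le_antisymm (iSup_le fun v => iSup_le fun hv => absurd hv (by omega)) bot_le
  have hVh0 : Vh 0 = ⊥ := hzeroCh Vt
  have hWth0 : Wth 0 = ⊥ := hzeroCh Wt
  have hWc0 : Wc 0 = ⊥ := rfl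
  have hVhtop : Vh (N1+2) = ⊤ := by simp only [hVh]; exact if_pos (by omega)
  have hWthtop : Wth (N1+2) = ⊤ := by simp only [hWth]; exact if_pos (by omega)
  have hWctop : Wc (N0+1) = ⊤ := Wh_top d0 hN0
  -- value at v.1 + 1
  have hatCh : ∀ (T : {v : ℕ // v ∈ Set.range d1} → Submodule k (B0 → k)),
      (∀ u v, u ≤ v → T u ≤ T v) → ∀ v : {v : ℕ // v ∈ Set.range d1},
      (if N1 + 1 < v.1 + 1 then (⊤ : Submodule k (B0 → k))
        else ⨆ u : {v : ℕ // v ∈ Set.range d1}, ⨆ _ : u.1 < v.1 + 1, T u) = T v := by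
    intro T hT v
    rw [if_neg (by have := hN1 v; omega)]
    apply le_antisymm
    · exact iSup_le fun u => iSup_le fun hu => hT u v (by exact Subtype.coe_le_coe.1 (by omega))
    · exact le_iSup_of_le v (le_iSup_of_le (by omega) le_rfl)
  have hVhat : ∀ v, Vh (v.1 + 1) = Vt v := hatCh Vt hVtmono
  have hWthat : ∀ v, Wth (v.1 + 1) = Wt v := hatCh Wt hWtmono
  -- trichotomy
  have hdesc : ∀ p : ℕ, (Vh p = ⊤ ∧ Wth p = ⊤) ∨ (Vh p = ⊥ ∧ Wth p = ⊥) ∨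
      (∃ v, Vh p = Vt v ∧ Wth p = Wt v) := by
    intro p
    by_cases hp : N1 + 1 < p
    · left
      constructor
      · simp only [hVh]; exact if_pos hp
      · simp only [hWth]; exact if_pos hp
    · by_cases hne : ∃ v : {v : ℕ // v ∈ Set.range d1}, v.1 < p
      · right; right
        set s : Finset {v : ℕ // v ∈ Set.range d1} :=
          Finset.univ.filter (fun v => v.1 < p) with hs
        have hsne : s.Nonempty := by
          obtain ⟨v, hv⟩ := hne
          exact ⟨v, by simp [hs, hv]⟩
        set vm := s.max' hsne with hvmdef
        have hvm : vm.1 < p := by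
          have := s.max'_mem hsne
          simp only [hs, Finset.mem_filter] at this
          exact this.2
        have hsupEq : ∀ (T : {v : ℕ // v ∈ Set.range d1} → Submodule k (B0 → k)),
            (∀ u v, u ≤ v → T u ≤ T v) →
            (⨆ u : {v : ℕ // v ∈ Set.range d1}, ⨆ _ : u.1 < p, T u) = T vm := by
          intro T hT
          apply le_antisymm
          · exact iSup_le fun u => iSup_le fun hu =>
              hT u vm (s.le_max' u (by simp [hs, hu]))
          · exact le_iSup_of_le vm (le_iSup_of_le hvm le_rfl)
        refine ⟨vm, ?_, ?_⟩
        · simp only [hVh]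
          rw [if_neg hp]
          exact hsupEq Vt hVtmono
        · simp only [hWth]
          rw [if_neg hp]
          exact hsupEq Wt hWtmono
      · right; left
        have hsupBot : ∀ (T : {v : ℕ // v ∈ Set.range d1} → Submodule k (B0 → k)),
            (⨆ u : {v : ℕ // v ∈ Set.range d1}, ⨆ _ : u.1 < p, T u) = ⊥ := by
          intro T
          exact le_antisymm (iSup_le fun u => iSup_le fun hu => absurd ⟨u, hu⟩ hne) bot_le
        constructor
        · simp only [hVh]; rw [if_neg hp]; exact hsupBot Vt
        · simp only [hWth]; rw [if_neg hp]; exact hsupBot Wt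
  have hdim : ∀ p q, finrank k ↥(Vh p ⊓ Wc q) = finrank k ↥(Wth p ⊓ Wc q) := by
    intro p q
    have hWcsucc : ∀ j : ℕ, Wc (j+1) = Wh d0 j := fun j => rfl
    rcases hdesc p with ⟨h1, h2⟩ | ⟨h1, h2⟩ | ⟨v, h1, h2⟩ <;> rw [h1, h2]
    match q with
    | 0 => rw [hWc0, inf_bot_eq, inf_bot_eq]
    | j+1 => rw [hWcsucc j]; exact hdims v j
  obtain ⟨g, hgW, hgV⟩ := core_exists Vh Wth Wc hVhmono hWthmono hWcmono hVh0 hWth0 hWc0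
    (N1+2) (N0+1) hVhtop hWthtop hWctop hdim
  -- the matrix of g
  set c : B0 → B0 → k := fun b' b => g (Pi.single b (1:k)) b' with hcdef
  set c' : B0 → B0 → k := fun b' b => g.symm (Pi.single b (1:k)) b' with hc'def
  have hsingle_smul : ∀ (a : B0 → k) (b : B0),
      (Pi.single b (a b) : B0 → k) = a b • (Pi.single b (1:k) : B0 → k) := by
    intro a b
    funext j
    by_cases hj : j = b
    · subst hj; simp
    · simp [Pi.single_eq_of_ne hj]
  have hgform : ∀ (gg : (B0 → k) ≃ₗ[k] (B0 → k)) (cc : B0 → B0 → k),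
      (∀ b' b, cc b' b = gg (Pi.single b (1:k)) b') →
      ∀ (a : B0 → k) (b' : B0), gg a b' = ∑ b, a b * cc b' b := by
    intro gg cc hcc a b'
    conv_lhs => rw [show a = ∑ b, Pi.single b (a b) from (Finset.univ_sum_single a).symm]
    rw [map_sum, Finset.sum_apply]
    apply Finset.sum_congr rfl
    intro b _
    rw [hsingle_smul a b, map_smul, Pi.smul_apply, smul_eq_mul, hcc]
  have hgc : ∀ (a : B0 → k) (b' : B0), g a b' = ∑ b, a b * c b' b :=
    hgform g c (fun _ _ => rfl)
  -- triangularity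
  have htriCh : ∀ (gg : (B0 → k) ≃ₗ[k] (B0 → k)),
      (∀ j, (Wh d0 j).map (gg : (B0 → k) →ₗ[k] (B0 → k)) = Wh d0 j) →
      Triangular d0 (fun b' b => gg (Pi.single b (1:k)) b') := by
    intro gg hgg b' b hb
    have hsing : Pi.single b (1:k) ∈ Wh d0 (d0 b) :=
      (mem_Wh d0).2 (fun b'' hb'' => Pi.single_eq_of_ne
        (fun he => hb'' (by rw [he])) 1)
    have hmem : gg (Pi.single b (1:k)) ∈ Wh d0 (d0 b) := by
      rw [← hgg (d0 b)]
      exact ⟨_, hsing, rfl⟩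
    exact (mem_Wh d0).1 hmem b' hb
  have hWhpres : ∀ j, (Wh d0 j).map (g : (B0 → k) →ₗ[k] (B0 → k)) = Wh d0 j := by
    intro j
    by_cases hj : j ≤ N0
    · exact hgW (j+1) (by omega)
    · have : Wh (k := k) d0 j = ⊤ := Wh_top d0 (fun b => by have := hN0 b; omega)
      rw [this, eq_top_iff]
      intro x _
      exact ⟨g.symm x, trivial, g.apply_symm_apply x⟩
  have hWhpres' : ∀ j, (Wh d0 j).map (g.symm : (B0 → k) →ₗ[k] (B0 → k)) = Wh d0 j :=
    fun j => mapped_symm g _ (hWhpres j)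
  have hc_tri : Triangular d0 c := htriCh g hWhpres
  have hc'_tri : Triangular d0 c' := htriCh g.symm hWhpres'
  -- the product identities
  have hprod : ∀ b' b2, (∑ b, c b' b * c' b b2) = (if b' = b2 then (1:k) else 0) := by
    intro b' b2
    have h1 := hgc (g.symm (Pi.single b2 (1:k))) b'
    rw [g.apply_symm_apply] at h1
    rw [show (∑ b, c b' b * c' b b2) = ∑ b, g.symm (Pi.single b2 (1:k)) b * c b' b from
      Finset.sum_congr rfl (fun b _ => mul_comm _ _), ← h1, Pi.single_apply]
  have hprod' : ∀ b' b2, (∑ b, c' b' b * c b b2) = (if b' = b2 then (1:k) else 0) := by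
    intro b' b2
    have h1 := hgform g.symm (fun x y => c' x y) (fun _ _ => rfl) (g (Pi.single b2 (1:k))) b'
    rw [g.symm_apply_apply] at h1
    rw [show (∑ b, c' b' b * c b b2) = ∑ b, g (Pi.single b2 (1:k)) b * c' b' b from
      Finset.sum_congr rfl (fun b _ => mul_comm _ _), ← h1, Pi.single_apply]
  have hdelta1 : (fun b' b2 => ∑ b, c b' b * c' b b2) =
      (fun b' b => if b' = b then (1:k) else 0) := by
    funext b' b2
    exact hprod b' b2
  have hdelta2 : (fun b' b2 => ∑ b, c' b' b * c b b2) =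
      (fun b' b => if b' = b then (1:k) else 0) := by
    funext b' b2
    exact hprod' b' b2
  -- the automorphism
  have pf1 : (muL d0 c).comp (muL d0 c') = LinearMap.id := by
    apply LinearMap.ext
    intro f
    rw [LinearMap.comp_apply, muL_comp d0 hc_tri hc'_tri f, hdelta1, muL_id]
    rfl
  have pf2 : (muL d0 c').comp (muL d0 c) = LinearMap.id := by
    apply LinearMap.ext
    intro f
    rw [LinearMap.comp_apply, muL_comp d0 hc'_tri hc_tri f, hdelta2, muL_id]
    rfl
  set μ : (B0 → Polynomial k) ≃ₗ[Polynomial k] (B0 → Polynomial k) :=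
    LinearEquiv.ofLinear (muL d0 c) (muL d0 c') pf1 pf2 with hμ
  have hμapply : ∀ f, μ f = muL d0 c f := fun f => rfl
  have hμid : ∀ f, muL d0 c (muL d0 c' f) = f := by
    intro f
    rw [muL_comp d0 hc_tri hc'_tri f, hdelta1, muL_id]
  have hgr : GradeRespecting k d0 μ := by
    intro v
    rw [gp_eq]
    apply le_antisymm
    · rintro x ⟨f, hf, rfl⟩
      exact muL_gp d0 hc_tri hf
    · intro x hx
      exact ⟨muL d0 c' x, muL_gp d0 hc'_tri hx, hμid x⟩
  refine ⟨μ, hgr, ?_⟩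
  intro v
  have hple : (V.1 v).map (μ.toLinearMap.restrictScalars k) ≤ gradedPiece' k d0 v.1 := by
    rintro x ⟨f, hf, rfl⟩
    exact muL_gp d0 hc_tri (V.2.1 v hf)
  have hqle : W.1 v ≤ gradedPiece' k d0 v.1 := W.2.1 v
  apply map_eq_of_injOn (theta d0 v.1) (gradedPiece' k d0 v.1) _ _ hple hqle (theta_injOn d0 v.1)
  have h1 : ((V.1 v).map (μ.toLinearMap.restrictScalars k)).map (theta d0 v.1) =
      (Vt v).map (g : (B0 → k) →ₗ[k] (B0 → k)) := by
    apply le_antisymm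
    · rintro x ⟨y, ⟨f, hf, rfl⟩, rfl⟩
      refine ⟨theta d0 v.1 f, ⟨f, hf, rfl⟩, ?_⟩
      exact (muL_theta d0 hc_tri g hgc (V.2.1 v hf)).symm
    · rintro x ⟨a, ⟨f, hf, rfl⟩, rfl⟩
      exact ⟨muL d0 c f, ⟨f, hf, rfl⟩, muL_theta d0 hc_tri g hgc (V.2.1 v hf)⟩
  have h2 : (Vt v).map (g : (B0 → k) →ₗ[k] (B0 → k)) = Wt v := by
    have h3 := hgV (v.1+1) (by have := hN1 v; omega)
    rw [hVhat v, hWthat v] at h3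
    exact h3
  rw [h1, h2]

end assemble

/-- In the one-variable case `n = 1`, for any finite index types `B₀, B₁` with degree
functions `d₀, d₁`, the set of orbits of the action of the group `GL(F(B₀,d₀))` of
grade-respecting automorphisms on the set of relation families is finite. -/
theorem finite_orbits_one_variable (k : Type) [Field k]
    (B0 B1 : Type) [Finite B0] [Finite B1] (d0 : B0 → ℕ) (d1 : B1 → ℕ) :
    Finite (Quot (sameOrbit k d0 d1)) := by
  classical
  haveI := Fintype.ofFinite B0
  haveI : Finite {v : ℕ // v ∈ Set.range d1} := (Set.finite_range d1).to_subtype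
  have hbound : ∀ (V : {V : {v : ℕ // v ∈ Set.range d1} →
        Submodule k (B0 → Polynomial k) // IsRelationFamily k d0 d1 V})
      (v : {v : ℕ // v ∈ Set.range d1}) (j : ℕ),
      finrank k ↥(V.1 v ⊓ Dm (v.1 - j)) < Nat.card B1 + 1 := by
    intro V v j
    haveI hfd : FiniteDimensional k ↥(V.1 v) := fd_of_le_gp d0 _ (V.2.1 v)
    have h1 : finrank k ↥(V.1 v ⊓ Dm (v.1 - j)) ≤ finrank k ↥(V.1 v) :=
      Submodule.finrank_mono inf_le_left
    have h2 := V.2.2.1 v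
    have h3 : Nat.card {b : B1 // d1 b ≤ v.1} ≤ Nat.card B1 :=
      Nat.card_le_card_of_injective _ Subtype.val_injective
    omega
  let F : Quot (sameOrbit k d0 d1) →
      (∀ v : {v : ℕ // v ∈ Set.range d1}, Fin (v.1+1) → Fin (Nat.card B1 + 1)) :=
    Quot.lift (fun V => fun v j => ⟨finrank k ↥(V.1 v ⊓ Dm (v.1 - j.1)), hbound V v j.1⟩)
      (by
        intro a b hab
        funext v j
        exact Fin.ext (invt_sameOrbit d0 d1 a b hab v j.1))
  have hFinj : Function.Injective F := by
    intro x y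
    induction x using Quot.ind with | _ a =>
    induction y using Quot.ind with | _ b =>
    intro hxy
    apply Quot.sound
    apply invt_hard d0 d1 a b
    intro v j
    by_cases hj : j ≤ v.1
    · exact Fin.mk.injEq _ _ _ _ ▸ congrFun (congrFun hxy v) ⟨j, by omega⟩
    · have e1 : v.1 - j = v.1 - v.1 := by omega
      rw [e1]
      have := congrFun (congrFun hxy v) ⟨v.1, by omega⟩
      exact Fin.mk.injEq _ _ _ _ ▸ this
  exact Finite.of_injective F hFinj

end
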